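/- For integers r ≥ 2 and k ≥ 2, h_{k,r}(r - 1/k) ≤ 0. Consequently h_{k,r} has a real root in the open interval (r - 1/k, r). -/

import Mathlib

/-!
Multiplying by `z - 1` and summing the geometric series gives
`(z - 1) * h r k z = z ^ k * (z - r) + (r - 1)`. At `z = r` this yields `h r k r = 1`, and at
`z = r - 1/k` the sign of `h` is that of `r - 1 - z ^ k / k`. Bernoulli's inequality gives
`(r - 1/k) ^ k = r ^ k (1 - 1/(r k)) ^ k > r ^ (k - 1) (r - 1) ≥ k (r - 1)`, so `h` is negative
there, and the intermediate value theorem produces the root.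
-/

noncomputable def h (r k : ℕ) (z : ℝ) : ℝ := z ^ k - ∑ i ∈ Finset.range k, ((r : ℝ) - 1) * z ^ i

lemma one_add_mul_lt_pow {s : ℝ} (hs : -1 ≤ s) (hs' : s ≠ 0) {n : ℕ} (hn : 2 ≤ n) :
    1 + n * s < (1 + s) ^ n := by
  have hn' : (1 : ℝ) < n := by exact_mod_cast hn
  simpa only [Real.rpow_natCast] using one_add_mul_self_lt_rpow_one_add hs hs' hn'

lemma mul_sub_one_lt_sub_inv_pow {r : ℝ} (hr : 2 ≤ r) {k : ℕ} (hk : 2 ≤ k) :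
    k * (r - 1) < (r - 1 / k) ^ k := by
  have hk₀ : (0 : ℝ) < k := by positivity
  have hrk : 1 ≤ r * k := by
    have hk' : (2 : ℝ) ≤ k := by exact_mod_cast hk
    nlinarith
  have hk_le : (k : ℝ) ≤ r ^ (k - 1) :=
    calc (k : ℝ) ≤ 2 ^ (k - 1) := by
          exact_mod_cast (show k ≤ 2 ^ (k - 1) by have := (k - 1).lt_two_pow_self; omega)
      _ ≤ r ^ (k - 1) := by gcongr
  have bernoulli : 1 + k * -(1 / (r * k)) < (1 + -(1 / (r * k))) ^ k :=
    one_add_mul_lt_pow (by simpa using inv_le_one_of_one_le₀ hrk)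
      (neg_ne_zero.mpr (by positivity)) hk
  calc (k : ℝ) * (r - 1) ≤ r ^ (k - 1) * (r - 1) := by gcongr; linarith
    _ = r ^ k * (1 + k * -(1 / (r * k))) := by
        obtain ⟨j, rfl⟩ := Nat.exists_eq_add_of_le' (Nat.one_le_of_lt hk)
        simp only [Nat.add_sub_cancel, pow_succ]
        field_simp
        ring
    _ < r ^ k * (1 + -(1 / (r * k))) ^ k := by gcongr
    _ = (r - 1 / k) ^ k := by
        rw [← mul_pow]
        congr 1
        field_simp
        ring

lemma sub_one_mul_h (r k : ℕ) (z : ℝ) : (z - 1) * h r k z = z ^ k * (z - r) + (r - 1) := by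
  rw [h, ← Finset.mul_sum]
  linear_combination (-((r : ℝ) - 1)) * geom_sum_mul z k

lemma h_natCast_self {r : ℕ} (hr : r ≠ 1) (k : ℕ) : h r k r = 1 := by
  have hr' : (r : ℝ) - 1 ≠ 0 := sub_ne_zero.mpr (by exact_mod_cast hr)
  apply mul_left_cancel₀ hr'
  rw [sub_one_mul_h]
  ring

lemma h_sub_inv_neg {r k : ℕ} (hr : 2 ≤ r) (hk : 2 ≤ k) : h r k (r - 1 / k) < 0 := by
  have hr' : (2 : ℝ) ≤ r := by exact_mod_cast hr
  have hk' : (2 : ℝ) ≤ k := by exact_mod_cast hk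
  have hz : 1 < (r : ℝ) - 1 / k := by
    have : 1 / (k : ℝ) ≤ 1 / 2 := by gcongr
    linarith
  have key := mul_sub_one_lt_sub_inv_pow hr' hk
  have hprod : ((r : ℝ) - 1 / k - 1) * h r k (r - 1 / k) < 0 := by
    rw [sub_one_mul_h, sub_sub_cancel_left]
    have : ((r : ℝ) - 1 / k) ^ k * (-(1 / k)) = -(((r : ℝ) - 1 / k) ^ k / k) := by ring
    rw [this, ← sub_eq_neg_add, sub_neg, lt_div_iff₀ (by positivity)]
    linarith
  exact neg_of_mul_neg_right hprod (by linarith)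

lemma continuous_h (r k : ℕ) : Continuous (h r k) := by
  unfold h
  fun_prop

theorem stmt2 (r k : ℕ) (hr : 2 ≤ r) (hk : 2 ≤ k) :
    h r k ((r : ℝ) - 1 / k) ≤ 0 ∧
      ∃ z ∈ Set.Ioo ((r : ℝ) - 1 / k) (r : ℝ), h r k z = 0 := by
  have hneg := h_sub_inv_neg hr hk
  have hlt : (r : ℝ) - 1 / k < r := sub_lt_self _ (by positivity)
  have hpos : 0 < h r k r := by rw [h_natCast_self (by omega)]; exact one_pos
  exact ⟨hneg.le, intermediate_value_Ioo hlt.le (continuous_h r k).continuousOn ⟨hneg, hpos⟩⟩
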